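/- Let G be a minimally bad graph and O = [v_1,…,v_n] a bad connected order of G with greedy colouring π = π_{G,O}. Let v be a vertex of degree 2 in G with neighbours b < a. Then exactly one of the following holds: (i) v = v_1 and v_2 = b; (ii) b < v < a. Moreover, π(v) ∈ {1,2}. -/

import Mathlib

open Classical in
noncomputable def greedyStep {V : Type*} (G : SimpleGraph V) (f : V → ℕ) (v : V) : V → ℕ :=
  fun u => if u = v then sInf {c : ℕ | 1 ≤ c ∧ ∀ w, G.Adj v w → f w ≠ c} else f u

noncomputable def greedyFrom {V : Type*} (G : SimpleGraph V) (f : V → ℕ) (l : List V) : V → ℕ :=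
  l.foldl (greedyStep G) f

noncomputable def greedy {V : Type*} (G : SimpleGraph V) (l : List V) : V → ℕ :=
  greedyFrom G (fun _ => 0) l

open Classical in
noncomputable def greedyStart2 {V : Type*} (G : SimpleGraph V) : List V → V → ℕ
  | [] => fun _ => 0
  | v :: rest => greedyFrom G (fun u => if u = v then 2 else 0) rest

noncomputable def chi {V : Type*} [Fintype V] (G : SimpleGraph V) : ℕ :=
  sInf {n : ℕ | G.Colorable n}

open Classical in
noncomputable def idx {V : Type*} (l : List V) (v : V) : ℕ := l.idxOf v

noncomputable def maxIdx {V : Type*} (l : List V) (A : Set V) : ℕ := sSup (idx l '' A)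
noncomputable def minIdx {V : Type*} (l : List V) (A : Set V) : ℕ := sInf (idx l '' A)

def IsConnOrder {V : Type*} (G : SimpleGraph V) (l : List V) : Prop :=
  l.Nodup ∧ (∀ v : V, v ∈ l) ∧
    ∀ i : Fin l.length, 0 < i.1 → ∃ j : Fin l.length, j.1 < i.1 ∧ G.Adj (l.get j) (l.get i)

def GoodOrder {V : Type*} [Fintype V] (G : SimpleGraph V) (l : List V) : Prop :=
  ∀ v : V, greedy G l v ≤ chi G

def Good {V : Type*} [Fintype V] (G : SimpleGraph V) : Prop :=
  ∀ s : Finset V, (G.induce (↑s : Set V)).Connected →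
    ∀ l : List ↥(↑s : Set V), IsConnOrder (G.induce (↑s : Set V)) l →
      GoodOrder (G.induce (↑s : Set V)) l

def BadOrder {V : Type*} [Fintype V] (G : SimpleGraph V) (l : List V) : Prop :=
  IsConnOrder G l ∧ ¬ GoodOrder G l

def MinimallyBad {V : Type*} [Fintype V] (G : SimpleGraph V) : Prop :=
  ¬ Good G ∧ ∀ s : Finset V, s ≠ Finset.univ →
    (G.induce (↑s : Set V)).Connected → Good (G.induce (↑s : Set V))

def IsInducedPath {V : Type*} (G : SimpleGraph V) (P : List V) : Prop :=
  P.Nodup ∧ ∀ i j : Fin P.length,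
    G.Adj (P.get i) (P.get j) ↔ (i.1 + 1 = j.1 ∨ j.1 + 1 = i.1)

def IsFlatPath {V : Type*} (G : SimpleGraph V) (P : List V) : Prop :=
  IsInducedPath G P ∧
    ∀ i : Fin P.length, 0 < i.1 → i.1 + 1 < P.length → (G.neighborSet (P.get i)).ncard = 2

def WellOrderedPath {V : Type*} (l P : List V) : Prop :=
  P.Pairwise (fun u v => idx l u < idx l v) ∨ P.Pairwise (fun u v => idx l v < idx l u)

def IsMaxFlatPath {V : Type*} (G : SimpleGraph V) (P : List V) : Prop :=
  IsFlatPath G P ∧ ∀ h : P ≠ [],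
    (G.neighborSet (P.head h)).ncard ≠ 2 ∧ (G.neighborSet (P.getLast h)).ncard ≠ 2

def ClawFree {V : Type*} (G : SimpleGraph V) : Prop :=
  ∀ a b c d : V, G.Adj a b → G.Adj a c → G.Adj a d → b ≠ c → b ≠ d → c ≠ d →
    G.Adj b c ∨ G.Adj b d ∨ G.Adj c d

def IsHole {V : Type*} (G : SimpleGraph V) (C : List V) : Prop :=
  4 ≤ C.length ∧ C.Nodup ∧
    ∀ i j : Fin C.length, G.Adj (C.get i) (C.get j) ↔
      ((i.1 + 1) % C.length = j.1 ∨ (j.1 + 1) % C.length = i.1)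

def GemFree {V : Type*} (G : SimpleGraph V) : Prop :=
  ¬ ∃ a b c d e : V, G.Adj a b ∧ G.Adj b c ∧ G.Adj c d ∧
    ¬ G.Adj a c ∧ ¬ G.Adj a d ∧ ¬ G.Adj b d ∧
    G.Adj e a ∧ G.Adj e b ∧ G.Adj e c ∧ G.Adj e d

/-!
If `v` came before both of its neighbours it would have no earlier neighbour, so in a connected
order it is the first vertex, it gets colour `1`, and the second vertex is a neighbour of `v`, hence
`b`. If `v` came after both neighbours, deleting `v` would leave a connected order of the good graph
`G - v` along which no colour changes, so `v` alone exceeds `χ(G)`; having two neighbours it gets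
colour at most `3`, whence `χ(G) = 2`. But in a connected order of a bipartite graph every vertex
after the first has an earlier neighbour on the other side, so greedy reproduces the bipartition
and uses two colours: a contradiction. In the remaining case `b < v < a`, and when `v` is coloured
only `b` is, so `π(v) ≤ 2`.
-/

open Finset

section

variable {V : Type*} {G : SimpleGraph V}

section Greedy

lemma greedyStep_self (f : V → ℕ) (v : V) :
    greedyStep G f v v = sInf {c : ℕ | 1 ≤ c ∧ ∀ w, G.Adj v w → f w ≠ c} :=
  if_pos rfl

lemma greedyStep_of_ne (f : V → ℕ) {u v : V} (h : u ≠ v) : greedyStep G f v u = f u :=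
  if_neg h

lemma greedyStep_self_le {f : V → ℕ} {v : V} {c : ℕ} (hc : 1 ≤ c)
    (hf : ∀ w, G.Adj v w → f w ≠ c) : greedyStep G f v v ≤ c := by
  rw [greedyStep_self]
  exact Nat.sInf_le ⟨hc, hf⟩

lemma greedyStep_self_spec {f : V → ℕ} {v : V} {c : ℕ} (hc : 1 ≤ c)
    (hf : ∀ w, G.Adj v w → f w ≠ c) :
    1 ≤ greedyStep G f v v ∧ ∀ w, G.Adj v w → f w ≠ greedyStep G f v v := by
  rw [greedyStep_self]
  exact Nat.sInf_mem (s := {c : ℕ | 1 ≤ c ∧ ∀ w, G.Adj v w → f w ≠ c}) ⟨c, hc, hf⟩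

lemma greedyStep_self_congr {f g : V → ℕ} {v : V} (hfg : ∀ w, G.Adj v w → f w = g w) :
    greedyStep G f v v = greedyStep G g v v := by
  simp only [greedyStep_self]
  congr 1
  ext c
  exact and_congr_right fun _ => forall_congr' fun w => imp_congr_right fun hw => by rw [hfg w hw]

/-- Colour `0` marks an uncoloured vertex, so it never blocks a colour `c ≥ 1`. -/
lemma exists_free_color (f : V → ℕ) (v : V) (s : Finset V)
    (hs : ∀ w, G.Adj v w → f w ≠ 0 → w ∈ s) :
    ∃ c, 1 ≤ c ∧ c ≤ #s + 1 ∧ ∀ w, G.Adj v w → f w ≠ c := by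
  have hcard : #(s.image f) < #(Icc 1 (#s + 1)) := by
    simpa using (card_image_le (s := s) (f := f)).trans_lt (Nat.lt_succ_self _)
  obtain ⟨c, hc, hcs⟩ := exists_mem_notMem_of_card_lt_card hcard
  rw [mem_Icc] at hc
  refine ⟨c, hc.1, hc.2, fun w hw hwc => ?_⟩
  have hw0 : f w ≠ 0 := by omega
  exact hcs (mem_image.2 ⟨w, hs w hw hw0, hwc⟩)

lemma greedyFrom_of_not_mem (f : V → ℕ) {u : V} {l : List V} (hu : u ∉ l) :
    greedyFrom G f l u = f u := by
  induction l generalizing f with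
  | nil => rfl
  | cons x t ih =>
    rw [List.mem_cons, not_or] at hu
    exact (ih _ hu.2).trans (greedyStep_of_ne f hu.1)

lemma greedy_append (l₁ l₂ : List V) : greedy G (l₁ ++ l₂) = greedyFrom G (greedy G l₁) l₂ :=
  List.foldl_append

lemma greedy_append_of_not_mem {l₁ l₂ : List V} {u : V} (hu : u ∉ l₂) :
    greedy G (l₁ ++ l₂) u = greedy G l₁ u := by
  rw [greedy_append, greedyFrom_of_not_mem _ hu]

lemma greedy_of_not_mem {l : List V} {u : V} (hu : u ∉ l) : greedy G l u = 0 :=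
  greedyFrom_of_not_mem _ hu

lemma greedy_append_cons_self {l₁ l₂ : List V} {v : V} (hv : v ∉ l₂) :
    greedy G (l₁ ++ v :: l₂) v = greedyStep G (greedy G l₁) v v := by
  rw [← List.singleton_append, ← List.append_assoc, greedy_append_of_not_mem hv, greedy_append]
  rfl

lemma greedy_append_cons_self_mem_Icc {l₁ l₂ : List V} {v : V} (hv : v ∉ l₂) (s : Finset V)
    (hs : ∀ w ∈ l₁, G.Adj v w → w ∈ s) :
    greedy G (l₁ ++ v :: l₂) v ∈ Set.Icc 1 (#s + 1) := by
  obtain ⟨c, hc1, hcs, hc⟩ := exists_free_color (greedy G l₁) v s fun w hw hw0 =>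
    hs w (by_contra fun h => hw0 (greedy_of_not_mem h)) hw
  rw [greedy_append_cons_self hv]
  exact ⟨(greedyStep_self_spec hc1 hc).1, (greedyStep_self_le hc1 hc).trans hcs⟩

lemma greedyFrom_congr_of_forall_not_adj {v : V} {f g : V → ℕ} (hfg : ∀ u, u ≠ v → f u = g u)
    {l : List V} (hl : ∀ x ∈ l, ¬ G.Adj v x) (u : V) (hu : u ≠ v) :
    greedyFrom G f l u = greedyFrom G g l u := by
  induction l generalizing f g with
  | nil => exact hfg u hu
  | cons x t ih =>
    refine ih (fun w hw => ?_) (fun y hy => hl y (List.mem_cons_of_mem x hy))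
    rcases eq_or_ne w x with rfl | hwx
    · refine greedyStep_self_congr fun y hy => hfg y ?_
      rintro rfl
      exact hl w List.mem_cons_self hy.symm
    · rw [greedyStep_of_ne f hwx, greedyStep_of_ne g hwx, hfg w hw]

lemma greedy_append_cons_of_forall_not_adj {l₁ l₂ : List V} {v u : V}
    (hv : ∀ x ∈ l₂, ¬ G.Adj v x) (hu : u ≠ v) :
    greedy G (l₁ ++ v :: l₂) u = greedy G (l₁ ++ l₂) u := by
  rw [greedy_append, greedy_append]
  exact greedyFrom_congr_of_forall_not_adj (fun w hw => greedyStep_of_ne _ hw) hv u hu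

lemma greedy_cons_self {l : List V} {v : V} (hv : v ∉ l) : greedy G (v :: l) v = 1 := by
  obtain ⟨h1, h2⟩ := greedy_append_cons_self_mem_Icc (G := G) (l₁ := []) hv ∅ (by simp)
  simp only [card_empty] at h2
  exact le_antisymm h2 h1

end Greedy

section Position

variable {l l₁ l₂ : List V} {v w : V}

lemma idx_cons_self (v : V) (l : List V) : idx (v :: l) v = 0 := by
  classical
  exact List.idxOf_cons_self

lemma idx_cons_of_ne (hw : w ≠ v) : idx (v :: l) w = idx l w + 1 := by
  classical
  exact List.idxOf_cons_ne l hw.symm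

lemma idx_append_of_mem (hw : w ∈ l₁) : idx (l₁ ++ l₂) w < l₁.length := by
  classical
  rw [idx, List.idxOf_append_of_mem hw]
  exact List.idxOf_lt_length_iff.2 hw

lemma idx_append_of_not_mem (hw : w ∉ l₁) : idx (l₁ ++ l₂) w = l₁.length + idx l₂ w := by
  classical
  exact List.idxOf_append_of_notMem hw

lemma idx_lt_idx_append_cons_iff (hv : v ∉ l₁) :
    idx (l₁ ++ v :: l₂) w < idx (l₁ ++ v :: l₂) v ↔ w ∈ l₁ := by
  rw [idx_append_of_not_mem hv, idx_cons_self]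
  by_cases hw : w ∈ l₁
  · simpa [hw] using idx_append_of_mem hw
  · simp [hw, idx_append_of_not_mem hw]

lemma idx_append_cons_lt_idx_iff (hv : v ∉ l₁) (hw : w ≠ v) :
    idx (l₁ ++ v :: l₂) v < idx (l₁ ++ v :: l₂) w ↔ w ∉ l₁ := by
  rw [idx_append_of_not_mem hv, idx_cons_self]
  by_cases hw₁ : w ∈ l₁
  · simpa [hw₁] using (idx_append_of_mem hw₁).le
  · simp [hw₁, idx_append_of_not_mem hw₁, idx_cons_of_ne hw]

lemma idx_eq_zero_of_head?_eq (h : l.head? = some v) : idx l v = 0 := by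
  obtain ⟨t, rfl⟩ := List.head?_eq_some_iff.1 h
  exact idx_cons_self v t

end Position

section ConnOrder

lemma forall_mem_of_forall_append_cons {α : Type*} {l : List α} {P : α → Prop}
    (h : ∀ p z t, l = p ++ z :: t → (∀ y ∈ p, P y) → P z) : ∀ y ∈ l, P y := by
  induction l using List.reverseRecOn with
  | nil => simp
  | append_singleton l z ih =>
    have ih' := ih fun p z' t hl => h p z' (t ++ [z]) (by simp [hl])
    intro y hy
    rcases List.mem_append.1 hy with hy | hy
    · exact ih' y hy
    · rw [List.mem_singleton.1 hy]
      exact h l z [] rfl ih'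

variable (G) in
def HasEarlierNeighbors (l : List V) : Prop :=
  ∀ p x s, l = p ++ x :: s → p ≠ [] → ∃ y ∈ p, G.Adj y x

lemma isConnOrder_iff {l : List V} :
    IsConnOrder G l ↔ l.Nodup ∧ (∀ v, v ∈ l) ∧ HasEarlierNeighbors G l := by
  refine and_congr_right' (and_congr_right' ⟨fun h p x s hl hp => ?_, fun h i hi => ?_⟩)
  · subst hl
    obtain ⟨j, hj, hadj⟩ := h ⟨p.length, by simp⟩ (List.length_pos_iff.2 hp)
    have hjp : (j : ℕ) < p.length := hj
    refine ⟨p[(j : ℕ)], List.getElem_mem hjp, ?_⟩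
    simpa [List.getElem_append_left hjp] using hadj
  · have hl : l = l.take i ++ l[(i : ℕ)] :: l.drop (i + 1) := by
      rw [← List.drop_eq_getElem_cons, List.take_append_drop]
    obtain ⟨y, hy, hadj⟩ := h _ _ _ hl (List.ne_nil_of_length_pos (by rw [List.length_take]; omega))
    obtain ⟨j, hj, rfl⟩ := List.getElem_of_mem hy
    have hji : j < i := by rw [List.length_take] at hj; omega
    exact ⟨⟨j, by omega⟩, hji, by simpa using hadj⟩

lemma HasEarlierNeighbors.erase {l₁ l₂ : List V} {v : V}
    (h : HasEarlierNeighbors G (l₁ ++ v :: l₂)) (hv : ∀ x ∈ l₂, ¬ G.Adj v x) :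
    HasEarlierNeighbors G (l₁ ++ l₂) := by
  have later : ∀ p x s, l₂ = p ++ x :: s → ∃ y ∈ l₁ ++ p, G.Adj y x := by
    intro p x s hp
    obtain ⟨y, hy, hyx⟩ := h (l₁ ++ v :: p) x s (by simp [hp]) (by simp)
    rcases List.mem_append.1 hy with hy | hy
    · exact ⟨y, List.mem_append_left _ hy, hyx⟩
    rcases List.mem_cons.1 hy with rfl | hy
    · exact absurd hyx (hv x (by simp [hp]))
    · exact ⟨y, List.mem_append_right _ hy, hyx⟩
  intro p x s hps hp
  rcases List.append_eq_append_iff.1 hps with ⟨p', rfl, hl₂⟩ | ⟨c, rfl, hc⟩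
  · exact later p' x s hl₂
  rcases c with _ | ⟨c, c'⟩
  · simpa using later [] x s (by simpa using hc.symm)
  · obtain ⟨rfl, rfl⟩ := List.cons_eq_cons.1 hc
    exact h p x (c' ++ v :: l₂) (by simp) hp

lemma HasEarlierNeighbors.of_map {W : Type*} {H : SimpleGraph W} (f : G ↪g H) {l : List V}
    (h : HasEarlierNeighbors H (l.map f)) : HasEarlierNeighbors G l := by
  intro p x s hl hp
  obtain ⟨y, hy, hyx⟩ := h (p.map f) (f x) (s.map f) (by simp [hl]) (by simpa using hp)
  obtain ⟨y', hy', rfl⟩ := List.mem_map.1 hy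
  exact ⟨y', hy', f.map_adj_iff.1 hyx⟩

lemma HasEarlierNeighbors.reachable {l : List V} {x : V} (h : HasEarlierNeighbors G l)
    (hx : l.head? = some x) : ∀ y ∈ l, G.Reachable x y := by
  refine forall_mem_of_forall_append_cons fun p z t hl ih => ?_
  rcases eq_or_ne p [] with rfl | hp
  · simp_all
  · obtain ⟨y, hy, hyz⟩ := h p z t hl hp
    exact (ih y hy).trans hyz.reachable

lemma IsConnOrder.connected [Nonempty V] {l : List V} (h : IsConnOrder G l) : G.Connected := by
  obtain ⟨-, hspan, hl⟩ := isConnOrder_iff.1 h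
  obtain ⟨x, t, rfl⟩ :=
    List.exists_cons_of_ne_nil (List.ne_nil_of_mem (hspan (Classical.arbitrary V)))
  have hreach := hl.reachable (x := x) rfl
  exact ⟨fun u w => (hreach u (hspan u)).symm.trans (hreach w (hspan w))⟩

lemma isConnOrder_induce_attachWith {A : Set V} {l : List V} (hA : ∀ x ∈ l, x ∈ A)
    (hnd : l.Nodup) (hspan : ∀ x ∈ A, x ∈ l) (hl : HasEarlierNeighbors G l) :
    IsConnOrder (G.induce A) (l.attachWith (· ∈ A) hA) := by
  have hmap : (l.attachWith (· ∈ A) hA).map (SimpleGraph.Embedding.induce (G := G) A) = l :=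
    List.attachWith_map_subtype_val hA
  refine isConnOrder_iff.2 ⟨List.Nodup.of_map Subtype.val ?_, fun x => ?_, ?_⟩
  · rwa [List.attachWith_map_subtype_val]
  · simpa using hspan x x.2
  · exact HasEarlierNeighbors.of_map _ (hmap ▸ hl)

lemma HasEarlierNeighbors.eq_nil_of_forall_not_adj {l₁ l₂ : List V} {v : V}
    (h : HasEarlierNeighbors G (l₁ ++ v :: l₂)) (hv : ∀ y ∈ l₁, ¬ G.Adj y v) : l₁ = [] := by
  by_contra hne
  obtain ⟨y, hy, hyv⟩ := h l₁ v l₂ rfl hne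
  exact hv y hy hyv

lemma HasEarlierNeighbors.getElem?_one_eq {l : List V} {v b : V}
    (h : HasEarlierNeighbors G (v :: l)) (hl : l ≠ []) (hb : G.Adj v b)
    (hbmin : ∀ w, G.Adj v w → idx (v :: l) b ≤ idx (v :: l) w) : (v :: l)[1]? = some b := by
  obtain ⟨y, t, rfl⟩ := List.exists_cons_of_ne_nil hl
  obtain ⟨z, hz, hzy⟩ := h [v] y t rfl (List.cons_ne_nil _ _)
  rw [List.mem_singleton.1 hz] at hzy
  have hby := hbmin y hzy
  rw [idx_cons_of_ne (G.ne_of_adj hzy).symm, idx_cons_of_ne (G.ne_of_adj hb).symm,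
    idx_cons_self] at hby
  by_contra hne
  rw [idx_cons_of_ne fun h => hne (by simp [h])] at hby
  omega

lemma HasEarlierNeighbors.eq_nil_and_getElem?_one_eq {l₁ l₂ : List V} {v a b : V}
    (h : HasEarlierNeighbors G (l₁ ++ v :: l₂)) (hv : v ∉ l₁) (hl₂ : l₂ ≠ [])
    (hadj : ∀ w, G.Adj v w ↔ w = b ∨ w = a) (hb : b ∉ l₁)
    (hba : idx (l₁ ++ v :: l₂) b < idx (l₁ ++ v :: l₂) a) :
    l₁ = [] ∧ (v :: l₂)[1]? = some b := by
  have ha : a ∉ l₁ := fun ha => hb ((idx_lt_idx_append_cons_iff hv).1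
    (hba.trans ((idx_lt_idx_append_cons_iff hv).2 ha)))
  obtain rfl : l₁ = [] := h.eq_nil_of_forall_not_adj fun y hy hyv => by
    rcases (hadj y).1 hyv.symm with rfl | rfl
    exacts [hb hy, ha hy]
  refine ⟨rfl, h.getElem?_one_eq hl₂ ((hadj b).2 (.inl rfl)) fun w hw => ?_⟩
  rcases (hadj w).1 hw with rfl | rfl
  exacts [le_rfl, hba.le]

end ConnOrder

section Induce

lemma greedyStep_induce {A : Set V} (f : V → ℕ) (hf : ∀ w ∉ A, f w = 0) (x : A) :
    greedyStep (G.induce A) (f ∘ (↑)) x = greedyStep G f x ∘ (↑) := by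
  funext u
  rcases eq_or_ne u x with rfl | hux
  · simp only [Function.comp_apply, greedyStep_self]
    congr 1
    ext c
    refine and_congr_right fun hc => ⟨fun h w hw => ?_, fun h w hw => h w hw⟩
    by_cases hwA : w ∈ A
    · exact h ⟨w, hwA⟩ hw
    · rw [hf w hwA]
      omega
  · rw [Function.comp_apply, greedyStep_of_ne _ hux,
      greedyStep_of_ne _ (Subtype.coe_injective.ne hux), Function.comp_apply]

lemma greedyFrom_induce {A : Set V} (L : List A) (f : V → ℕ) (hf : ∀ w ∉ A, f w = 0) (u : A) :
    greedyFrom (G.induce A) (f ∘ (↑)) L u = greedyFrom G f (L.map (↑)) u := by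
  induction L generalizing f with
  | nil => rfl
  | cons x t ih =>
    refine (congrArg (greedyFrom _ · t u) (greedyStep_induce f hf x)).trans (ih _ fun w hw => ?_)
    rw [greedyStep_of_ne _ (by rintro rfl; exact hw x.2), hf w hw]

lemma greedy_induce {A : Set V} (L : List A) (u : A) :
    greedy (G.induce A) L u = greedy G (L.map (↑)) u :=
  greedyFrom_induce L (fun _ => 0) (fun _ _ => rfl) u

lemma greedy_induce_attachWith {A : Set V} {l : List V} (hA : ∀ x ∈ l, x ∈ A) (u : A) :
    greedy (G.induce A) (l.attachWith (· ∈ A) hA) u = greedy G l u := by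
  rw [greedy_induce, List.attachWith_map_subtype_val]

end Induce

section ChromaticNumber

lemma colorable_chi [Fintype V] (G : SimpleGraph V) : G.Colorable (chi G) :=
  Nat.sInf_mem (s := {n | G.Colorable n}) ⟨Fintype.card V, G.colorable_of_fintype⟩

lemma chi_le_of_colorable [Fintype V] {n : ℕ} (h : G.Colorable n) : chi G ≤ n :=
  Nat.sInf_le h

lemma chi_induce_le [Fintype V] (A : Set V) [Fintype A] : chi (G.induce A) ≤ chi G :=
  chi_le_of_colorable ((colorable_chi G).of_hom (SimpleGraph.Embedding.induce A).toHom)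

lemma two_le_chi_of_adj [Fintype V] {u w : V} (h : G.Adj u w) : 2 ≤ chi G := by
  by_contra! hlt
  obtain ⟨C⟩ := colorable_chi G
  exact C.valid h (Fin.ext (by have := (C u).2; have := (C w).2; omega))

end ChromaticNumber

lemma Good.goodOrder [Fintype V] (hG : Good G) {l : List V} (hl : IsConnOrder G l) :
    GoodOrder G l := by
  intro u
  obtain ⟨hnd, hspan, hearly⟩ := isConnOrder_iff.1 hl
  have hA : ∀ x ∈ l, x ∈ ((univ : Finset V) : Set V) := fun x _ => by simp
  have hord := isConnOrder_induce_attachWith hA hnd (fun x _ => hspan x) hearly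
  have : Nonempty ((univ : Finset V) : Set V) := ⟨⟨u, by simp⟩⟩
  calc greedy G l u = greedy (G.induce _) (l.attachWith (· ∈ ((univ : Finset V) : Set V)) hA)
        ⟨u, by simp⟩ := by rw [greedy_induce_attachWith]
    _ ≤ chi (G.induce _) := hG univ hord.connected _ hord _
    _ ≤ chi G := chi_induce_le _

lemma greedy_eq_of_coloring_fin_two (C : G.Coloring (Fin 2)) {l : List V} {x : V}
    (hx : l.head? = some x) (hnd : l.Nodup) (hl : HasEarlierNeighbors G l) :
    ∀ y ∈ l, greedy G l y = if C y = C x then 1 else 2 := by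
  set g : V → ℕ := fun y => if C y = C x then 1 else 2
  have fin_two : ∀ i j k : Fin 2, i ≠ k → j ≠ k → i = j := by decide
  have hg : ∀ y w, G.Adj y w → g y ≠ g w := by
    intro y w h
    have := C.valid h
    simp only [g]
    split_ifs with hy hw hw
    · exact absurd (hy.trans hw.symm) this
    · omega
    · omega
    · exact absurd (fin_two _ _ _ hy hw) this
  refine forall_mem_of_forall_append_cons fun p z t hl' ih => ?_
  subst hl'
  have hprefix : ∀ y ∈ p, greedy G p y = g y := fun y hy => by
    rw [← greedy_append_of_not_mem (List.disjoint_of_nodup_append hnd hy)]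
    exact ih y hy
  have hg1 : 1 ≤ g z := by simp only [g]; split_ifs <;> omega
  have hfree : ∀ w, G.Adj z w → greedy G p w ≠ g z := by
    intro w hw
    by_cases hwp : w ∈ p
    · rw [hprefix w hwp]
      exact hg w z hw.symm
    · rw [greedy_of_not_mem hwp]
      omega
  show greedy G (p ++ z :: t) z = g z
  rw [greedy_append_cons_self (List.nodup_cons.1 hnd.of_append_right).1]
  have hle := greedyStep_self_le hg1 hfree
  obtain ⟨h1, hne⟩ := greedyStep_self_spec hg1 hfree
  by_cases hzx : C z = C x
  · simp only [g, hzx, if_true] at hle ⊢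
    omega
  · have hp : p ≠ [] := by
      rintro rfl
      exact hzx (congrArg C (Option.some.inj hx))
    obtain ⟨y, hy, hyz⟩ := hl p z t rfl hp
    have hy1 : greedy G p y = 1 := by
      rw [hprefix y hy]
      exact if_pos (fin_two _ _ _ (C.valid hyz) (Ne.symm hzx))
    have := hne y hyz.symm
    simp only [g, hzx, if_false] at hle ⊢
    omega

lemma greedy_le_two [Fintype V] (hc : G.Colorable 2) {l : List V} (hl : IsConnOrder G l)
    (u : V) : greedy G l u ≤ 2 := by
  obtain ⟨C⟩ := hc
  obtain ⟨hnd, hspan, hearly⟩ := isConnOrder_iff.1 hl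
  obtain ⟨x, t, rfl⟩ := List.exists_cons_of_ne_nil (List.ne_nil_of_mem (hspan u))
  rw [greedy_eq_of_coloring_fin_two C rfl hnd hearly u (hspan u)]
  split_ifs <;> omega

lemma MinimallyBad.chi_lt_greedy_of_forall_not_adj [Fintype V] (hmin : MinimallyBad G)
    {l₁ l₂ : List V} {v : V} (hbad : BadOrder G (l₁ ++ v :: l₂))
    (hv : ∀ x ∈ l₂, ¬ G.Adj v x) : chi G < greedy G (l₁ ++ v :: l₂) v := by
  classical
  obtain ⟨hord, hnotgood⟩ := hbad
  obtain ⟨hnd, hspan, hearly⟩ := isConnOrder_iff.1 hord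
  by_contra! hle
  refine hnotgood fun u => ?_
  rcases eq_or_ne u v with rfl | huv
  · exact hle
  have hvl : v ∉ l₁ ++ l₂ := (List.nodup_cons.1 (List.nodup_middle.1 hnd)).1
  set A : Finset V := univ.erase v
  have hA : ∀ x ∈ l₁ ++ l₂, x ∈ (A : Set V) := fun x hx => by
    simpa [A] using ne_of_mem_of_not_mem hx hvl
  have hspanA : ∀ x ∈ (A : Set V), x ∈ l₁ ++ l₂ := fun x hx => by
    have hxv : x ≠ v := by simpa [A] using hx
    simpa [hxv] using hspan x
  have hordA := isConnOrder_induce_attachWith hA (List.nodup_middle.1 hnd).of_cons hspanA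
    (hearly.erase hv)
  have : Nonempty (A : Set V) := ⟨⟨u, by simp [A, huv]⟩⟩
  have hgood := hmin.2 A (erase_ssubset (mem_univ v)).ne hordA.connected
  calc greedy G (l₁ ++ v :: l₂) u = greedy G (l₁ ++ l₂) u :=
        greedy_append_cons_of_forall_not_adj hv huv
    _ = greedy (G.induce A) ((l₁ ++ l₂).attachWith (· ∈ (A : Set V)) hA) ⟨u, by simp [A, huv]⟩ := by
        rw [greedy_induce_attachWith]
    _ ≤ chi (G.induce A) := hgood.goodOrder hordA _
    _ ≤ chi G := chi_induce_le _

lemma adj_iff_of_neighborSet_eq {v a b w : V} (hN : G.neighborSet v = {b, a}) :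
    G.Adj v w ↔ w = b ∨ w = a := by
  rw [← SimpleGraph.mem_neighborSet, hN]
  rfl

lemma MinimallyBad.exists_later_adj_of_neighborSet_eq [Fintype V] (hmin : MinimallyBad G)
    {l₁ l₂ : List V} {v a b : V} (hbad : BadOrder G (l₁ ++ v :: l₂))
    (hN : G.neighborSet v = {b, a}) : ∃ x ∈ l₂, G.Adj v x := by
  classical
  by_contra! hv
  have hlt := hmin.chi_lt_greedy_of_forall_not_adj hbad hv
  have hvl₂ : v ∉ l₂ := (List.nodup_cons.1 hbad.1.1.of_append_right).1
  have hle := (greedy_append_cons_self_mem_Icc (l₁ := l₁) hvl₂ {b, a} fun w _ hw => by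
    simpa using (adj_iff_of_neighborSet_eq hN).1 hw).2
  have hcard := card_le_two (a := b) (b := a)
  have hchi := two_le_chi_of_adj ((adj_iff_of_neighborSet_eq hN).2 (.inl rfl))
  have h2 := greedy_le_two ((colorable_chi G).mono (by omega)) hbad.1 v
  omega

end

theorem stmt10_general {V : Type*} [Fintype V] (G : SimpleGraph V) (l : List V)
    (hmin : MinimallyBad G) (hbad : BadOrder G l)
    (v1 : V) (hv1 : l.head? = some v1)
    (v a b : V) (hN : G.neighborSet v = {b, a})
    (hba : idx l b < idx l a) :
    Xor' (v = v1 ∧ l[1]? = some b)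
      (idx l b < idx l v ∧ idx l v < idx l a) ∧
    (greedy G l v = 1 ∨ greedy G l v = 2) := by
  classical
  have hadj : ∀ w, G.Adj v w ↔ w = b ∨ w = a := fun w => adj_iff_of_neighborSet_eq hN
  obtain ⟨hnd, hspan, hearly⟩ := isConnOrder_iff.1 hbad.1
  obtain ⟨l₁, l₂, rfl⟩ := List.append_of_mem (hspan v)
  obtain ⟨x, hx, hvx⟩ := hmin.exists_later_adj_of_neighborSet_eq hbad hN
  have hvl₁ : v ∉ l₁ := fun h => List.disjoint_of_nodup_append hnd h List.mem_cons_self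
  have hvl₂ : v ∉ l₂ := (List.nodup_cons.1 hnd.of_append_right).1
  by_cases hb : b ∈ l₁
  · have ha : a ∉ l₁ := fun ha => by
      rcases (hadj x).1 hvx with rfl | rfl <;>
        exact List.disjoint_of_nodup_append hnd ‹_› (List.mem_cons_of_mem _ hx)
    have hav : a ≠ v := (G.ne_of_adj ((hadj a).2 (.inr rfl))).symm
    obtain ⟨h1, h2⟩ := greedy_append_cons_self_mem_Icc (l₁ := l₁) hvl₂ {b} fun w hw hvw => by
      rcases (hadj w).1 hvw with rfl | rfl
      exacts [mem_singleton_self w, absurd hw ha]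
    rw [card_singleton] at h2
    have hbv := (idx_lt_idx_append_cons_iff (l₂ := l₂) hvl₁).2 hb
    have hfirst := idx_eq_zero_of_head?_eq hv1
    refine ⟨.inr ⟨⟨hbv, (idx_append_cons_lt_idx_iff hvl₁ hav).2 ha⟩, fun h => ?_⟩, by omega⟩
    rw [← h.1] at hfirst
    omega
  · obtain ⟨rfl, hsecond⟩ :=
      hearly.eq_nil_and_getElem?_one_eq hvl₁ (List.ne_nil_of_mem hx) hadj hb hba
    rw [List.nil_append] at hv1
    exact ⟨.inl ⟨⟨Option.some.inj hv1, hsecond⟩, by simp [idx_cons_self]⟩,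
      .inl (greedy_cons_self hvl₂)⟩

theorem stmt10 {V : Type*} [Fintype V] (G : SimpleGraph V) (l : List V)
    (hmin : MinimallyBad G) (hbad : BadOrder G l)
    (v1 : V) (hv1 : l.head? = some v1)
    (v a b : V) (hab : b ≠ a) (hN : G.neighborSet v = {b, a})
    (hba : idx l b < idx l a) :
    Xor' (v = v1 ∧ l[1]? = some b)
      (idx l b < idx l v ∧ idx l v < idx l a) ∧
    (greedy G l v = 1 ∨ greedy G l v = 2) :=
  stmt10_general G l hmin hbad v1 hv1 v a b hN hba
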